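/- arXiv:2602.03299 — 3 statements merged into one kernel-verified Lean document; each statement's English description precedes it below -/
import Mathlib

section
/- For every real s > 0, one has the identity 2^{2s} · Γ((3+2s)/4)² / Γ((3-2s)/4)² = Γ(s+1/2)²/Γ(1/2)² + (sin(πs)/π) · Γ(s+1/2)², provided (3-2s)/4 is not a nonpositive integer. Equivalently, since Γ(1/2) = √π, the left-hand side equals ((1 + sin(πs))/π) · Γ(s+1/2)². -/
/-- Gamma identity expressing the bottom of the spectrum of the fractional GJMS operator. -/
theorem stmt_1 (s : ℝ) (hs : 0 < s) (h : ∀ k : ℕ, (3 - 2*s)/4 ≠ -(k:ℝ)) :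
    (2:ℝ) ^ (2*s) * (Real.Gamma ((3+2*s)/4))^2 / (Real.Gamma ((3-2*s)/4))^2
      = (Real.Gamma (s+1/2))^2 / (Real.Gamma (1/2))^2
        + (Real.sin (Real.pi*s) / Real.pi) * (Real.Gamma (s+1/2))^2 ∧
    (2:ℝ) ^ (2*s) * (Real.Gamma ((3+2*s)/4))^2 / (Real.Gamma ((3-2*s)/4))^2
      = ((1 + Real.sin (Real.pi*s)) / Real.pi) * (Real.Gamma (s+1/2))^2 := by
  have hpi : (0:ℝ) < Real.pi := Real.pi_pos
  have hpine : Real.pi ≠ 0 := ne_of_gt hpi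
  have hb : Real.Gamma ((3-2*s)/4) ≠ 0 := Real.Gamma_ne_zero h
  have hcpos : 0 < Real.Gamma ((1+2*s)/4) := Real.Gamma_pos_of_pos (by linarith)
  have hc : Real.Gamma ((1+2*s)/4) ≠ 0 := ne_of_gt hcpos
  have hsin : Real.sin (Real.pi * ((3-2*s)/4)) ≠ 0 := by
    intro h0
    rw [Real.sin_eq_zero_iff] at h0
    obtain ⟨n, hn⟩ := h0
    rw [mul_comm] at hn
    have hn' : (3-2*s)/4 = (n:ℝ) := (mul_left_cancel₀ hpine hn).symm
    rcases le_or_gt n 0 with hn0 | hn0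
    · have hz : ((-n).toNat : ℤ) = -n := Int.toNat_of_nonneg (by omega)
      refine h (-n).toNat ?_
      rw [hn', show (((-n).toNat : ℕ) : ℝ) = ((((-n).toNat : ℤ)) : ℝ) by push_cast; ring, hz]
      push_cast; ring
    · have h1 : (1:ℝ) ≤ (n:ℝ) := by exact_mod_cast hn0
      have h2 : (3-2*s)/4 ≥ 1 := by rw [hn']; exact h1
      linarith
  have hrefl := Real.Gamma_mul_Gamma_one_sub ((3-2*s)/4)
  rw [show (1:ℝ) - (3-2*s)/4 = (1+2*s)/4 by ring, eq_div_iff hsin] at hrefl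
  have hdup := Real.Gamma_mul_Gamma_add_half ((1+2*s)/4)
  rw [show (1+2*s)/4 + 1/2 = (3+2*s)/4 by ring,
      show 2 * ((1+2*s)/4) = s + 1/2 by ring] at hdup
  have hpow : (2:ℝ) ^ (2*s) * ((2:ℝ) ^ (1 - (s + 1/2)))^2 = 2 := by
    rw [← Real.rpow_natCast ((2:ℝ) ^ (1 - (s+1/2))) 2, ← Real.rpow_mul (by norm_num),
        ← Real.rpow_add (by norm_num), show 2*s + (1 - (s+1/2)) * (2:ℕ) = 1 by push_cast; ring,
        Real.rpow_one]
  have htrig : 2 * Real.sin (Real.pi * ((3-2*s)/4))^2 = 1 + Real.sin (Real.pi * s) := by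
    have h2 : Real.cos (2 * (Real.pi * ((3-2*s)/4))) = 1 - 2 * Real.sin (Real.pi * ((3-2*s)/4))^2 := by
      rw [Real.cos_two_mul']
      have := Real.sin_sq_add_cos_sq (Real.pi * ((3-2*s)/4))
      linarith
    have h3 : Real.cos (2 * (Real.pi * ((3-2*s)/4))) = - Real.sin (Real.pi * s) := by
      rw [show 2 * (Real.pi * ((3-2*s)/4)) = Real.pi + (Real.pi/2 - Real.pi * s) by ring,
          Real.cos_add, Real.cos_pi_div_two_sub, Real.sin_pi_div_two_sub, Real.cos_pi, Real.sin_pi]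
      ring
    linarith
  have hGb : Real.Gamma ((3-2*s)/4) = Real.pi / (Real.sin (Real.pi * ((3-2*s)/4)) * Real.Gamma ((1+2*s)/4)) := by
    rw [eq_div_iff (mul_ne_zero hsin hc)]
    linear_combination hrefl
  have hGa : Real.Gamma ((3+2*s)/4) = Real.Gamma (s+1/2) * (2:ℝ) ^ (1 - (s+1/2)) * Real.sqrt Real.pi / Real.Gamma ((1+2*s)/4) := by
    rw [eq_div_iff hc]
    linear_combination hdup
  have hsq : (Real.sqrt Real.pi)^2 = Real.pi := Real.sq_sqrt (le_of_lt hpi)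
  have key : (2:ℝ) ^ (2*s) * (Real.Gamma ((3+2*s)/4))^2 / (Real.Gamma ((3-2*s)/4))^2
      = ((1 + Real.sin (Real.pi*s)) / Real.pi) * (Real.Gamma (s+1/2))^2 := by
    rw [hGa, hGb, div_pow, div_pow, mul_pow, mul_pow]
    rw [hsq]
    set G := Real.Gamma (s+1/2) with hG
    set C := Real.Gamma ((1+2*s)/4) with hC
    set S := Real.sin (Real.pi * ((3-2*s)/4)) with hS
    set A := (2:ℝ)^(2*s) with hA
    set B := (2:ℝ)^(1-(s+1/2)) with hB
    field_simp
    linear_combination (G^2*S^2) * hpow + (G^2) * htrig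
  refine ⟨?_, key⟩
  rw [key, Real.Gamma_one_half_eq, Real.sq_sqrt (le_of_lt hpi)]
  field_simp
end

section
/- For s > 0, the function β ↦ |Γ(s + 1/2 + iβ)|² / |Γ(1/2 + iβ)|², defined for real β, attains its minimum over β ∈ ℝ at β = 0, and the minimum value equals Γ(s+1/2)²/π. -/
open Complex intervalIntegral

lemma key_ineq (s β : ℝ) (hs : 0 < s) :
    Real.Gamma (s+1/2) * ‖Complex.Gamma (1/2 + β*Complex.I)‖
      ≤ Real.Gamma (1/2) * ‖Complex.Gamma ((s:ℂ)+1/2+β*Complex.I)‖ := by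
  set u : ℂ := 1/2 + β*Complex.I with hu_def
  have hu : u.re = 1/2 := by simp [hu_def]
  have hsre : (0:ℝ) < ((s:ℂ)).re := by simpa using hs
  have hure : (0:ℝ) < u.re := by rw [hu]; norm_num
  set I0 : ℝ := ∫ x in (0:ℝ)..1, x ^ (-(1/2):ℝ) * (1-x) ^ (s-1) with hI0
  have hnorm : ∀ x ∈ Set.uIcc (0:ℝ) 1,
      ‖(x:ℂ) ^ (u-1) * (1-(x:ℂ)) ^ ((s:ℂ)-1)‖
        = x ^ (-(1/2):ℝ) * (1-x) ^ (s-1) := by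
    intro x hx
    rw [Set.uIcc_of_le (by norm_num : (0:ℝ) ≤ 1)] at hx
    obtain ⟨hx0, hx1⟩ := hx
    have h2 : (1:ℂ) - (x:ℂ) = ((1-x:ℝ):ℂ) := by push_cast; ring
    have h3 : ((s:ℂ)-1) = (((s-1:ℝ)):ℂ) := by push_cast; ring
    have h4 : ‖(1-(x:ℂ)) ^ ((s:ℂ)-1)‖ = (1-x) ^ (s-1) := by
      rw [h2, h3, ← Complex.ofReal_cpow (by linarith), Complex.norm_real, Real.norm_eq_abs,
        _root_.abs_of_nonneg (Real.rpow_nonneg (by linarith) _)]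
    rw [norm_mul, h4]
    rcases eq_or_lt_of_le hx0 with h | h
    · rw [← h]
      have hne : u - 1 ≠ 0 := by
        intro hc
        have := congrArg Complex.re hc
        rw [Complex.sub_re, hu] at this
        norm_num at this
      have hz : ((0:ℝ):ℂ) ^ (u-1) = 0 := by
        rw [Complex.ofReal_zero, Complex.zero_cpow hne]
      rw [hz, norm_zero, zero_mul, Real.zero_rpow (by norm_num : (-(1/2):ℝ) ≠ 0), zero_mul]
    · rw [Complex.norm_cpow_eq_rpow_re_of_pos h,
        show (u-1).re = -(1/2) by rw [Complex.sub_re, hu]; norm_num]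
  have hbound : ‖Complex.betaIntegral u s‖ ≤ I0 := by
    have h1 := intervalIntegral.norm_integral_le_integral_norm
      (f := fun x : ℝ => (x:ℂ) ^ (u-1) * (1-(x:ℂ)) ^ ((s:ℂ)-1)) (μ := MeasureTheory.volume)
      (a := 0) (b := 1) (by norm_num)
    calc ‖Complex.betaIntegral u s‖
        ≤ ∫ x in (0:ℝ)..1, ‖(x:ℂ) ^ (u-1) * (1-(x:ℂ)) ^ ((s:ℂ)-1)‖ := h1
      _ = I0 := intervalIntegral.integral_congr hnorm
  have hreal : Complex.betaIntegral (1/2) s = (I0 : ℂ) := by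
    rw [Complex.betaIntegral, hI0]
    rw [← intervalIntegral.integral_ofReal]
    apply intervalIntegral.integral_congr
    intro x hx
    rw [Set.uIcc_of_le (by norm_num : (0:ℝ) ≤ 1)] at hx
    obtain ⟨hx0, hx1⟩ := hx
    show (x:ℂ) ^ ((1:ℂ)/2-1) * (1-(x:ℂ)) ^ ((s:ℂ)-1)
        = ((x ^ (-(1/2):ℝ) * (1-x) ^ (s-1) : ℝ) : ℂ)
    have h2 : (1:ℂ) - (x:ℂ) = ((1-x:ℝ):ℂ) := by push_cast; ring
    have h3 : ((s:ℂ)-1) = (((s-1:ℝ)):ℂ) := by push_cast; ring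
    have h5 : ((1:ℂ)/2 - 1) = (((-(1/2):ℝ)):ℂ) := by push_cast; ring
    rw [h2, h3, h5, ← Complex.ofReal_cpow hx0, ← Complex.ofReal_cpow (by linarith)]
    push_cast
    ring
  have hG := Complex.Gamma_mul_Gamma_eq_betaIntegral hure hsre
  have hGr : Complex.Gamma (1/2) * Complex.Gamma s
      = Complex.Gamma (1/2 + s) * Complex.betaIntegral (1/2) s :=
    Complex.Gamma_mul_Gamma_eq_betaIntegral (by norm_num) hsre
  rw [hreal] at hGr
  have hGr' : Real.Gamma (1/2) * Real.Gamma s = Real.Gamma (1/2 + s) * I0 := by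
    have h : ((Real.Gamma (1/2) : ℂ)) * ((Real.Gamma s : ℂ))
        = ((Real.Gamma (1/2 + s) : ℂ)) * ((I0 : ℝ) : ℂ) := by
      rw [← Complex.Gamma_ofReal, ← Complex.Gamma_ofReal, ← Complex.Gamma_ofReal,
        show (((1/2 : ℝ)):ℂ) = (1:ℂ)/2 by norm_num,
        show (((1/2 + s : ℝ)):ℂ) = (1:ℂ)/2 + (s:ℂ) by push_cast; ring]
      exact hGr
    exact_mod_cast h
  have hGs : Complex.Gamma (s:ℂ) = (Real.Gamma s : ℂ) := Complex.Gamma_ofReal s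
  have hGspos : 0 < Real.Gamma s := Real.Gamma_pos_of_pos hs
  have habs : ‖Complex.Gamma u‖ * Real.Gamma s
      = ‖Complex.Gamma (u + s)‖ * ‖Complex.betaIntegral u s‖ := by
    have h := congrArg norm hG
    rw [norm_mul, norm_mul, hGs, Complex.norm_real, Real.norm_eq_abs, _root_.abs_of_pos hGspos] at h
    exact h
  have hGshalfpos : 0 < Real.Gamma (s+1/2) := Real.Gamma_pos_of_pos (by linarith)
  have hUS : u + (s:ℂ) = (s:ℂ)+1/2+β*Complex.I := by rw [hu_def]; ring
  have habsUS : 0 ≤ ‖Complex.Gamma (u + s)‖ := norm_nonneg _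
  have hhs : Real.Gamma (1/2 + s) = Real.Gamma (s + 1/2) := by ring_nf
  have key : (Real.Gamma (s+1/2) * ‖Complex.Gamma u‖) * Real.Gamma s
      ≤ (Real.Gamma (1/2) * ‖Complex.Gamma (u+s)‖) * Real.Gamma s := by
    calc (Real.Gamma (s+1/2) * ‖Complex.Gamma u‖) * Real.Gamma s
        = Real.Gamma (s+1/2) * (‖Complex.Gamma u‖ * Real.Gamma s) := by ring
      _ = Real.Gamma (s+1/2) * (‖Complex.Gamma (u + s)‖ * ‖Complex.betaIntegral u s‖) := by rw [habs]
      _ ≤ Real.Gamma (s+1/2) * (‖Complex.Gamma (u + s)‖ * I0) := by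
          apply mul_le_mul_of_nonneg_left _ (le_of_lt hGshalfpos)
          exact mul_le_mul_of_nonneg_left hbound habsUS
      _ = ‖Complex.Gamma (u + s)‖ * (Real.Gamma (s+1/2) * I0) := by ring
      _ = ‖Complex.Gamma (u + s)‖ * (Real.Gamma (1/2) * Real.Gamma s) := by
          rw [← hhs, ← hGr']
      _ = (Real.Gamma (1/2) * ‖Complex.Gamma (u+s)‖) * Real.Gamma s := by ring
  have hfin := le_of_mul_le_mul_right key hGspos
  rw [hUS] at hfin
  exact hfin

/-- The Helgason–Fourier multiplier `m̃_s` attains its minimum at `β = 0`,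
with minimum value `Γ(s+1/2)²/π`. -/
theorem stmt_4 (s : ℝ) (hs : 0 < s) :
    (∀ β : ℝ,
      (‖Complex.Gamma ((s:ℂ)+1/2)‖)^2
          / (‖Complex.Gamma ((1:ℂ)/2)‖)^2
        ≤ (‖Complex.Gamma ((s:ℂ)+1/2+β*Complex.I)‖)^2
          / (‖Complex.Gamma ((1:ℂ)/2+β*Complex.I)‖)^2) ∧
    (‖Complex.Gamma ((s:ℂ)+1/2)‖)^2
        / (‖Complex.Gamma ((1:ℂ)/2)‖)^2
      = (Real.Gamma (s+1/2))^2 / Real.pi := by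
  have h1 : ‖Complex.Gamma ((s:ℂ)+1/2)‖ = Real.Gamma (s+1/2) := by
    rw [show ((s:ℂ)+1/2) = (((s+1/2:ℝ)):ℂ) by push_cast; ring, Complex.Gamma_ofReal,
      Complex.norm_real, Real.norm_eq_abs, _root_.abs_of_pos (Real.Gamma_pos_of_pos (by linarith))]
  have h2 : ‖Complex.Gamma ((1:ℂ)/2)‖ = Real.Gamma (1/2) := by
    rw [show ((1:ℂ)/2) = (((1/2:ℝ)):ℂ) by push_cast; ring, Complex.Gamma_ofReal,
      Complex.norm_real, Real.norm_eq_abs, _root_.abs_of_pos (Real.Gamma_pos_of_pos (by norm_num))]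
  have hpi : Real.Gamma (1/2) ^ 2 = Real.pi := by
    rw [Real.Gamma_one_half_eq, Real.sq_sqrt Real.pi_pos.le]
  have hGshalfpos : 0 < Real.Gamma (s+1/2) := Real.Gamma_pos_of_pos (by linarith)
  have hGhalfpos : 0 < Real.Gamma (1/2) := Real.Gamma_pos_of_pos (by norm_num)
  constructor
  · intro β
    have hkey := key_ineq s β hs
    have hd : 0 < ‖Complex.Gamma ((1:ℂ)/2+β*Complex.I)‖ := by
      have hne : Complex.Gamma ((1:ℂ)/2+β*Complex.I) ≠ 0 := by
        apply Complex.Gamma_ne_zero_of_re_pos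
        simp
      simpa [norm_pos_iff] using hne
    have hc : 0 ≤ ‖Complex.Gamma ((s:ℂ)+1/2+β*Complex.I)‖ := norm_nonneg _
    rw [h1, h2]
    rw [div_le_div_iff₀ (by positivity) (by positivity)]
    have hkey' : Real.Gamma (s+1/2) * ‖Complex.Gamma ((1:ℂ)/2 + β*Complex.I)‖
        ≤ Real.Gamma (1/2) * ‖Complex.Gamma ((s:ℂ)+1/2+β*Complex.I)‖ := hkey
    nlinarith [hkey', hGshalfpos.le, hd.le, hc, mul_nonneg hGshalfpos.le hd.le,
      mul_nonneg hGhalfpos.le hc]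
  · rw [h1, h2, hpi]
end

section
/- Let Q : V → ℝ be a quadratic form on a real vector space V of compactly supported functions on a metric measure space, and suppose there exist φ ∈ V with Q(φ) = −q < 0, and for each N ∈ ℕ translates φ₁,…,φ_N of φ (by measure-preserving isometries preserving Q) with pairwise support distances ≥ R_N, such that the pairwise interaction terms satisfy |B(φ_i, φ_j)| ≤ C e^{-αR_N} for constants C, α > 0, where B is the bilinear form of Q. If the critical norm satisfies ‖Σφ_j‖_{L^p}^2 = N^{2/p}‖φ‖_{L^p}^2 for p > 2, then choosing R_N = (2/α) log N + R₀ with 2Ce^{-αR₀} ≤ q/4, one obtains Q(Σ_{j=1}^N φ_j) ≤ −(q/2)N for all large N, and hence Q(Σφ_j)/‖Σφ_j‖_{L^p}² ≤ −k N^{1-2/p} → −∞ as N → ∞, where k = (q/2)‖φ‖_{L^p}^{-2}. -/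
/-- Combinatorial core of the proof that the Poincaré–Sobolev level drops to `−∞`
above the spectral bottom: many far-apart negative-energy bubbles. -/
theorem stmt_16 {V : Type*} [AddCommGroup V] (B : V → V → ℝ)
    (hBadd₁ : ∀ u v w : V, B (u+v) w = B u w + B v w)
    (hBadd₂ : ∀ u v w : V, B u (v+w) = B u v + B u w)
    (hBsymm : ∀ u v : V, B u v = B v u)
    (q C α R₀ npU p : ℝ)
    (hq : 0 < q) (hC : 0 < C) (hα : 0 < α) (hp : 2 < p)
    (hR₀ : 2*C*Real.exp (-α*R₀) ≤ q/4) (hnp : 0 < npU)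
    (φ : ℕ → ℕ → V)
    (hdiag : ∀ N j : ℕ, j < N → B (φ N j) (φ N j) = -q)
    (hoff : ∀ N i j : ℕ, i < N → j < N → i ≠ j →
      |B (φ N i) (φ N j)| ≤ C * Real.exp (-α*((2/α)*Real.log (N:ℝ) + R₀)))
    (Np : V → ℝ)
    (hNp : ∀ N : ℕ, 1 ≤ N →
      (Np (∑ j ∈ Finset.range N, φ N j))^2 = (N:ℝ) ^ (2/p) * npU^2) :
    ∃ N₀ : ℕ, ∀ N : ℕ, N₀ ≤ N →
      B (∑ j ∈ Finset.range N, φ N j) (∑ j ∈ Finset.range N, φ N j) ≤ -(q/2)*(N:ℝ) ∧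
      B (∑ j ∈ Finset.range N, φ N j) (∑ j ∈ Finset.range N, φ N j)
          / (Np (∑ j ∈ Finset.range N, φ N j))^2
        ≤ -((q/2)/npU^2) * (N:ℝ) ^ (1-2/p) := by
  -- B is zero on 0
  have hB0 : ∀ w : V, B 0 w = 0 := by
    intro w
    have := hBadd₁ 0 0 w
    simp at this
    linarith
  have hB0' : ∀ w : V, B w 0 = 0 := by
    intro w; rw [hBsymm]; exact hB0 w
  -- bilinearity over sums
  have hsum₁ : ∀ (s : Finset ℕ) (f : ℕ → V) (w : V),
      B (∑ i ∈ s, f i) w = ∑ i ∈ s, B (f i) w := by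
    intro s f w
    induction s using Finset.induction with
    | empty => simpa using hB0 w
    | insert a s hi ih =>
      rw [Finset.sum_insert hi, Finset.sum_insert hi, hBadd₁, ih]
  have hsum₂ : ∀ (s : Finset ℕ) (f : ℕ → V) (w : V),
      B w (∑ i ∈ s, f i) = ∑ i ∈ s, B w (f i) := by
    intro s f w
    rw [hBsymm, hsum₁]
    exact Finset.sum_congr rfl fun i _ => hBsymm _ _
  refine ⟨1, fun N hN => ?_⟩
  have hN1 : (1:ℝ) ≤ (N:ℝ) := by exact_mod_cast hN
  have hNpos : (0:ℝ) < N := lt_of_lt_of_le one_pos hN1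
  set S := ∑ j ∈ Finset.range N, φ N j with hS
  have hexpand : B S S = ∑ i ∈ Finset.range N, ∑ j ∈ Finset.range N,
      B (φ N i) (φ N j) := by
    rw [hS, hsum₁]
    exact Finset.sum_congr rfl fun i _ => hsum₂ _ _ _
  -- the off-diagonal bound rewritten
  have hε : C * Real.exp (-α*((2/α)*Real.log (N:ℝ) + R₀))
      = C * Real.exp (-α*R₀) / (N:ℝ)^2 := by
    have h1 : -α*((2/α)*Real.log (N:ℝ) + R₀)
        = Real.log (N:ℝ) * (-2) + (-α*R₀) := by
      field_simp
      ring
    rw [h1, Real.exp_add]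
    have h2 : Real.exp (Real.log (N:ℝ) * (-2)) = (N:ℝ) ^ (-2 : ℝ) := by
      rw [Real.rpow_def_of_pos hNpos]
    rw [h2]
    rw [show ((-2:ℝ)) = ((-2 : ℤ) : ℝ) by norm_num, Real.rpow_intCast]
    field_simp
  -- main energy estimate
  have hmain : B S S ≤ -q * N + C * Real.exp (-α*R₀) := by
    rw [hexpand]
    have hsplit : ∀ i ∈ Finset.range N,
        ∑ j ∈ Finset.range N, B (φ N i) (φ N j)
        = -q + ∑ j ∈ (Finset.range N).erase i, B (φ N i) (φ N j) := by
      intro i hi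
      rw [← Finset.add_sum_erase _ _ hi, hdiag N i (Finset.mem_range.mp hi)]
    rw [Finset.sum_congr rfl hsplit, Finset.sum_add_distrib]
    have hcard : ∑ _i ∈ Finset.range N, (-q) = -q * N := by
      rw [Finset.sum_const, Finset.card_range]; ring
    rw [hcard]
    have hoffbd : ∑ i ∈ Finset.range N, ∑ j ∈ (Finset.range N).erase i,
        B (φ N i) (φ N j) ≤ C * Real.exp (-α*R₀) := by
      calc ∑ i ∈ Finset.range N, ∑ j ∈ (Finset.range N).erase i, B (φ N i) (φ N j)
          ≤ ∑ i ∈ Finset.range N, ∑ j ∈ (Finset.range N).erase i,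
            (C * Real.exp (-α*R₀) / (N:ℝ)^2) := by
            apply Finset.sum_le_sum
            intro i hi
            apply Finset.sum_le_sum
            intro j hj
            have hji : j ≠ i := Finset.ne_of_mem_erase hj
            have hjN : j < N := Finset.mem_range.mp (Finset.mem_of_mem_erase hj)
            have := hoff N i j (Finset.mem_range.mp hi) hjN (Ne.symm hji)
            rw [hε] at this
            exact le_trans (le_abs_self _) this
        _ ≤ C * Real.exp (-α*R₀) := by
            simp only [Finset.sum_const]
            have hpos : 0 < C * Real.exp (-α*R₀) / (N:ℝ)^2 := by positivity
            calc ∑ i ∈ Finset.range N,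
                  ((Finset.range N).erase i).card • (C * Real.exp (-α*R₀) / (N:ℝ)^2)
                ≤ ∑ _i ∈ Finset.range N, (N:ℝ) * (C * Real.exp (-α*R₀) / (N:ℝ)^2) := by
                  apply Finset.sum_le_sum
                  intro i _
                  rw [nsmul_eq_mul]
                  apply mul_le_mul_of_nonneg_right _ (le_of_lt hpos)
                  have : ((Finset.range N).erase i).card ≤ N := by
                    calc ((Finset.range N).erase i).card ≤ (Finset.range N).card :=
                          Finset.card_le_card (Finset.erase_subset _ _)
                      _ = N := Finset.card_range N
                  exact_mod_cast this
              _ = (N:ℝ) * ((N:ℝ) * (C * Real.exp (-α*R₀) / (N:ℝ)^2)) := by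
                  rw [Finset.sum_const, Finset.card_range, nsmul_eq_mul]
              _ = C * Real.exp (-α*R₀) := by
                  field_simp
    linarith
  have hCe : C * Real.exp (-α*R₀) ≤ q/8 := by linarith
  have h1 : B S S ≤ -(q/2)*(N:ℝ) := by
    have : -q * N + q/8 ≤ -(q/2)*(N:ℝ) := by nlinarith
    linarith
  refine ⟨h1, ?_⟩
  have hNp' := hNp N hN
  have hrpos : (0:ℝ) < (N:ℝ) ^ (2/p) := Real.rpow_pos_of_pos hNpos _
  have hden : (0:ℝ) < (Np S)^2 := by rw [hNp']; positivity
  have h2 : B S S / (Np S)^2 ≤ (-(q/2)*(N:ℝ)) / (Np S)^2 := by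
    gcongr
  rw [hNp'] at h2
  have h3 : (-(q/2)*(N:ℝ)) / ((N:ℝ) ^ (2/p) * npU^2)
      = -((q/2)/npU^2) * (N:ℝ) ^ (1-2/p) := by
    rw [Real.rpow_sub hNpos, Real.rpow_one]
    field_simp
  rw [hNp']
  linarith [h2, h3.le, h3.ge]
end
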